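/- Every AC-MAS P_ACP induced by an artifact-centric program ACP is uniform. -/

import Mathlib

/-!  Common formalisation of artifact-centric multi-agent systems (AC-MAS). -/

open Set

/-- A database schema: a finite type of relation symbols, each with an arity. -/
structure Schema : Type 1 where
  Rel : Type
  [relFin : Fintype Rel]
  arity : Rel → ℕ

attribute [instance] Schema.relFin

/-- A `D`-instance over an interpretation domain `U`: every relation symbol is
interpreted as a finite set of tuples over `U`. -/
structure Inst (D : Schema) (U : Type) : Type where
  rel : ∀ r : D.Rel, Set (Fin (D.arity r) → U)
  finite : ∀ r, (rel r).Finite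

/-- The active domain of an instance. -/
def Inst.adom {D : Schema} {U : Type} (I : Inst D U) : Set U :=
  { u | ∃ (r : D.Rel) (t : Fin (D.arity r) → U), t ∈ I.rel r ∧ ∃ j, t j = u }

/-- The schema `D` together with a primed copy of every relation symbol. -/
def Schema.double (D : Schema) : Schema where
  Rel := D.Rel ⊕ D.Rel
  relFin := inferInstance
  arity := Sum.elim D.arity D.arity

/-- The disjunctive join `I ⊕ J`: unprimed symbols are interpreted as in `I`,
primed symbols as in `J`. -/
def Inst.oplus {D : Schema} {U : Type} (I J : Inst D U) : Inst D.double U where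
  rel := fun r => match r with
    | .inl r₀ => I.rel r₀
    | .inr r₀ => J.rel r₀
  finite := fun r => by
    cases r with
    | inl r₀ => exact I.finite r₀
    | inr r₀ => exact J.finite r₀

/-- Image of an instance under a map of domains. -/
def Inst.map {D : Schema} {C U : Type} (f : C → U) (I : Inst D C) : Inst D U where
  rel := fun r => (fun t => f ∘ t) '' I.rel r
  finite := fun r => (I.finite r).image _

/-! ### First-order formulas -/

/-- Terms: variables (natural numbers) or constants from `C`. -/
abbrev Term (C : Type) := ℕ ⊕ C

def Term.varsF {C : Type} : Term C → Finset ℕ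
  | .inl x => {x}
  | .inr _ => ∅

def Term.constsS {C : Type} : Term C → Set C
  | .inl _ => ∅
  | .inr c => {c}

def Term.val {C U : Type} (cst : C → U) (σ : ℕ → U) : Term C → U
  | .inl x => σ x
  | .inr c => cst c

/-- First-order formulas over schema `D`, with equality, constants from `C`
and no function symbols. -/
inductive FO (D : Schema) (C : Type) : Type where
  | eq : Term C → Term C → FO D C
  | rel : (r : D.Rel) → (Fin (D.arity r) → Term C) → FO D C
  | not : FO D C → FO D C
  | imp : FO D C → FO D C → FO D C
  | all : ℕ → FO D C → FO D C

namespace FO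

variable {D : Schema} {C : Type}

/-- Free variables. -/
def free : FO D C → Finset ℕ
  | .eq t₁ t₂ => t₁.varsF ∪ t₂.varsF
  | .rel _ ts => Finset.univ.biUnion fun j => (ts j).varsF
  | .not φ => φ.free
  | .imp φ ψ => φ.free ∪ ψ.free
  | .all x φ => φ.free.erase x

/-- All variables. -/
def vars : FO D C → Finset ℕ
  | .eq t₁ t₂ => t₁.varsF ∪ t₂.varsF
  | .rel _ ts => Finset.univ.biUnion fun j => (ts j).varsF
  | .not φ => φ.vars
  | .imp φ ψ => φ.vars ∪ ψ.vars
  | .all x φ => insert x φ.vars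

/-- Constants mentioned in a formula. -/
def consts : FO D C → Set C
  | .eq t₁ t₂ => t₁.constsS ∪ t₂.constsS
  | .rel _ ts => ⋃ j, (ts j).constsS
  | .not φ => φ.consts
  | .imp φ ψ => φ.consts ∪ ψ.consts
  | .all _ φ => φ.consts

/-- The formula mentions only relation symbols from `R`. -/
def UsesOnly (R : Set D.Rel) : FO D C → Prop
  | .eq _ _ => True
  | .rel r _ => r ∈ R
  | .not φ => φ.UsesOnly R
  | .imp φ ψ => φ.UsesOnly R ∧ ψ.UsesOnly R
  | .all _ φ => φ.UsesOnly R

/-- Satisfaction of FO-formulas, with active-domain quantification. -/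
def sat {U : Type} (cst : C → U) (I : Inst D U) : (ℕ → U) → FO D C → Prop
  | σ, .eq t₁ t₂ => t₁.val cst σ = t₂.val cst σ
  | σ, .rel r ts => (fun j => (ts j).val cst σ) ∈ I.rel r
  | σ, .not φ => ¬ sat cst I σ φ
  | σ, .imp φ ψ => sat cst I σ φ → sat cst I σ ψ
  | σ, .all x φ => ∀ u ∈ I.adom, sat cst I (Function.update σ x u) φ

end FO

/-! ### Agents and AC-MAS -/

/-- The signature of an agent: a finite set of action types with parameter counts. -/
structure AgentSig : Type 1 where
  Act : Type
  [actFin : Fintype Act]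
  np : Act → ℕ

attribute [instance] AgentSig.actFin

/-- A ground action: an action type together with ground parameters. -/
def GAct (g : AgentSig) (U : Type) : Type := Σ a : g.Act, Fin (g.np a) → U

/-- Renaming of ground-action parameters. -/
def GAct.map {g : AgentSig} {U U' : Type} (f : U → U') : GAct g U → GAct g U'
  | ⟨a, u⟩ => ⟨a, fun j => f (u j)⟩

/-- An agent: local states structured as database instances, and a protocol. -/
structure Agent (D : Schema) (g : AgentSig) (U : Type) : Type where
  L : Set (Inst D U)
  Pr : Inst D U → Set (GAct g U)

/-- A global state: one local database instance per agent `0, …, n`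
(agent `0` is the environment). -/
abbrev GState (D : Schema) (n : ℕ) (U : Type) := Fin (n+1) → Inst D U

/-- A joint (global) ground action. -/
abbrev JAct {n : ℕ} (sig : Fin (n+1) → AgentSig) (U : Type) : Type := ∀ i, GAct (sig i) U

def JAct.map {n : ℕ} {sig : Fin (n+1) → AgentSig} {U U' : Type} (f : U → U')
    (a : JAct sig U) : JAct sig U' := fun i => (a i).map f

/-- The set of individuals occurring as parameters of a joint ground action. -/
def actElems {n : ℕ} {sig : Fin (n+1) → AgentSig} {U : Type} (a : JAct sig U) : Set U :=
  { u | ∃ (i : Fin (n+1)) (j : Fin ((sig i).np (a i).1)), (a i).2 j = u }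

/-- Active domain of a family of instances (e.g. a global state). -/
def adomF {D : Schema} {X U : Type} (s : X → Inst D U) : Set U := ⋃ i, (s i).adom

/-- The global instance `D_s` associated with a global state. -/
def gInst {D : Schema} {n : ℕ} {U : Type} (s : GState D n U) : Inst D U where
  rel := fun r => ⋃ i, (s i).rel r
  finite := fun r => Set.finite_iUnion fun i => (s i).finite r

/-- Componentwise disjunctive join of two global states. -/
def oplusG {D : Schema} {n : ℕ} {U : Type} (s t : GState D n U) : GState D.double n U :=
  fun i => (s i).oplus (t i)

/-- An artifact-centric multi-agent system. -/
structure ACMAS (D : Schema) {n : ℕ} (sig : Fin (n+1) → AgentSig) {U : Type}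
    (Ag : ∀ i, Agent D (sig i) U) : Type where
  /-- set of (reachable) global states -/
  S : Set (GState D n U)
  /-- initial global state -/
  s0 : GState D n U
  s0_mem : s0 ∈ S
  states_local : ∀ s ∈ S, ∀ i, s i ∈ (Ag i).L
  /-- global transition function -/
  τ : GState D n U → JAct sig U → Set (GState D n U)
  /-- `τ` is defined only on protocol-enabled joint actions -/
  tau_enabled : ∀ s a, (τ s a).Nonempty → ∀ i, a i ∈ (Ag i).Pr (s i)
  tau_closed : ∀ s ∈ S, ∀ a, τ s a ⊆ S

namespace ACMAS

variable {D : Schema} {n : ℕ} {sig : Fin (n+1) → AgentSig} {U : Type}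
  {Ag : ∀ i, Agent D (sig i) U}

/-- The transition relation `s → t`. -/
def Tr (M : ACMAS D sig Ag) (s t : GState D n U) : Prop := ∃ a, t ∈ M.τ s a

/-- Epistemic indistinguishability for agent `i`. -/
def Epi (M : ACMAS D sig Ag) (i : Fin (n+1)) (s t : GState D n U) : Prop :=
  s ∈ M.S ∧ t ∈ M.S ∧ s i = t i

/-- Union of the epistemic relations of agents `1, …, n`. -/
def EpiAny (M : ACMAS D sig Ag) (s t : GState D n U) : Prop :=
  ∃ i : Fin n, M.Epi i.succ s t

/-- The standard assumptions: the transition relation is serial and `S` is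
exactly the set of states reachable from `s0`. -/
def Std (M : ACMAS D sig Ag) : Prop :=
  (∀ s ∈ M.S, ∃ t, M.Tr s t) ∧ M.S = { s | Relation.ReflTransGen M.Tr M.s0 s }

/-- An (infinite) run. -/
def IsRun (M : ACMAS D sig Ag) (r : ℕ → GState D n U) : Prop :=
  (∀ k, r k ∈ M.S) ∧ ∀ k, M.Tr (r k) (r (k+1))

/-- A temporal-epistemic run. -/
def IsTERun (M : ACMAS D sig Ag) (r : ℕ → GState D n U) : Prop :=
  (∀ k, r k ∈ M.S) ∧ ∀ k, M.Tr (r k) (r (k+1)) ∨ M.EpiAny (r k) (r (k+1))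

end ACMAS

/-! ### Isomorphisms and equivalent assignments -/

/-- `ι` is a witness for the isomorphism of the families `s` and `s'`:
a constant-preserving bijection between the active domains extended with the
constants, preserving all relations componentwise. -/
def IsWitness {D : Schema} {X C U U' : Type} (cst : C → U) (cst' : C → U')
    (ι : U → U') (s : X → Inst D U) (s' : X → Inst D U') : Prop :=
  Set.BijOn ι (adomF s ∪ Set.range cst) (adomF s' ∪ Set.range cst') ∧
  (∀ c, ι (cst c) = cst' c) ∧
  ∀ (i : X) (r : D.Rel) (t : Fin (D.arity r) → U),
    (∀ j, t j ∈ adomF s ∪ Set.range cst) →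
    (t ∈ (s i).rel r ↔ (fun j => ι (t j)) ∈ (s' i).rel r)

/-- Isomorphism of families of instances (in particular global states). -/
def Iso {D : Schema} {X C U U' : Type} (cst : C → U) (cst' : C → U')
    (s : X → Inst D U) (s' : X → Inst D U') : Prop :=
  ∃ ι, IsWitness cst cst' ι s s'

/-- Equivalent assignments for a set `V` of variables w.r.t. `s` and `s'`. -/
def EqAssign {D : Schema} {n : ℕ} {C U U' : Type} (cst : C → U) (cst' : C → U')
    (V : Set ℕ) (σ : ℕ → U) (σ' : ℕ → U')
    (s : GState D n U) (s' : GState D n U') : Prop :=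
  ∃ γ : U → U',
    Set.BijOn γ (adomF s ∪ Set.range cst ∪ σ '' V)
      (adomF s' ∪ Set.range cst' ∪ σ' '' V) ∧
    IsWitness cst cst' γ s s' ∧
    ∀ x ∈ V, σ' x = γ (σ x)

/-! ### Simulations and bisimulations -/

section Bisim

variable {D : Schema} {n : ℕ} {sig sig' : Fin (n+1) → AgentSig} {C U U' : Type}
  {Ag : ∀ i, Agent D (sig i) U} {Ag' : ∀ i, Agent D (sig' i) U'}

/-- Simulation between two AC-MAS. -/
def IsSim (cst : C → U) (cst' : C → U')
    (M : ACMAS D sig Ag) (M' : ACMAS D sig' Ag')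
    (R : GState D n U → GState D n U' → Prop) : Prop :=
  ∀ s s', R s s' →
    s ∈ M.S ∧ s' ∈ M'.S ∧ Iso cst cst' s s' ∧
    ∀ t, M.Tr s t → ∃ t', M'.Tr s' t' ∧ R t t'

/-- Bisimulation. -/
def IsBisim (cst : C → U) (cst' : C → U')
    (M : ACMAS D sig Ag) (M' : ACMAS D sig' Ag')
    (R : GState D n U → GState D n U' → Prop) : Prop :=
  IsSim cst cst' M M' R ∧ IsSim cst' cst M' M (fun s' s => R s s')

/-- Bisimilarity of states. -/
def Bisimilar (cst : C → U) (cst' : C → U')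
    (M : ACMAS D sig Ag) (M' : ACMAS D sig' Ag')
    (s : GState D n U) (s' : GState D n U') : Prop :=
  ∃ R, IsBisim cst cst' M M' R ∧ R s s'

/-- `P ≈ P'`: the two systems are bisimilar. -/
def BisimSys (cst : C → U) (cst' : C → U')
    (M : ACMAS D sig Ag) (M' : ACMAS D sig' Ag') : Prop :=
  Bisimilar cst cst' M M' M.s0 M'.s0

/-- ⊕-simulation. -/
def IsOSim (cst : C → U) (cst' : C → U')
    (M : ACMAS D sig Ag) (M' : ACMAS D sig' Ag')
    (R : GState D n U → GState D n U' → Prop) : Prop :=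
  ∀ s s', R s s' →
    s ∈ M.S ∧ s' ∈ M'.S ∧ Iso cst cst' s s' ∧
    (∀ t, M.Tr s t → ∃ t', M'.Tr s' t' ∧
        Iso cst cst' (oplusG s t) (oplusG s' t') ∧ R t t') ∧
    (∀ (t : GState D n U) (i : Fin n), M.Epi i.succ s t →
        ∃ t', M'.Epi i.succ s' t' ∧
          Iso cst cst' (oplusG s t) (oplusG s' t') ∧ R t t')

/-- ⊕-bisimulation. -/
def IsOBisim (cst : C → U) (cst' : C → U')
    (M : ACMAS D sig Ag) (M' : ACMAS D sig' Ag')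
    (R : GState D n U → GState D n U' → Prop) : Prop :=
  IsOSim cst cst' M M' R ∧ IsOSim cst' cst M' M (fun s' s => R s s')

/-- ⊕-bisimilarity of states. -/
def OBisimilar (cst : C → U) (cst' : C → U')
    (M : ACMAS D sig Ag) (M' : ACMAS D sig' Ag')
    (s : GState D n U) (s' : GState D n U') : Prop :=
  ∃ R, IsOBisim cst cst' M M' R ∧ R s s'

/-- The two systems are ⊕-bisimilar. -/
def OBisimSys (cst : C → U) (cst' : C → U')
    (M : ACMAS D sig Ag) (M' : ACMAS D sig' Ag') : Prop :=
  OBisimilar cst cst' M M' M.s0 M'.s0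

end Bisim

/-! ### Uniformity and boundedness -/

section Uniform

variable {D : Schema} {n : ℕ} {sig : Fin (n+1) → AgentSig} {C U : Type}
  {Ag : ∀ i, Agent D (sig i) U}

/-- Temporal condition (1) of uniformity. -/
def UniformT (cst : C → U) (M : ACMAS D sig Ag) : Prop :=
  ∀ s ∈ M.S, ∀ t ∈ M.S, ∀ s' ∈ M.S, ∀ (t' : GState D n U) (a : JAct sig U),
    t ∈ M.τ s a →
    ∀ ι : U → U, IsWitness cst cst ι (oplusG s t) (oplusG s' t') →
    ∀ ι' : U → U,
      (∀ u ∈ adomF (oplusG s t) ∪ Set.range cst, ι' u = ι u) →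
      Set.InjOn ι' (adomF (oplusG s t) ∪ Set.range cst ∪ actElems a) →
      (∀ c, ι' (cst c) = cst c) →
      t' ∈ M.τ s' (JAct.map ι' a)

/-- Epistemic condition (2) of uniformity. -/
def UniformE (cst : C → U) (M : ACMAS D sig Ag) : Prop :=
  ∀ s ∈ M.S, ∀ t ∈ M.S, ∀ s' ∈ M.S, ∀ (t' : GState D n U) (i : Fin n),
    M.Epi i.succ s t → Iso cst cst (oplusG s t) (oplusG s' t') →
    M.Epi i.succ s' t'

/-- Uniform AC-MAS. -/
def Uniform (cst : C → U) (M : ACMAS D sig Ag) : Prop :=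
  UniformT cst M ∧ UniformE cst M

/-- `b`-bounded AC-MAS: no reachable state has more than `b` distinct elements
in its active domain. -/
def BBounded (M : ACMAS D sig Ag) (b : ℕ) : Prop :=
  ∀ s ∈ M.S, (adomF s).Finite ∧ (adomF s).ncard ≤ b

end Uniform

/-- `N_Ag`: the sum over the agents of the maximal number of parameters of
their action types. -/
def NAg {n : ℕ} (sig : Fin (n+1) → AgentSig) : ℕ :=
  ∑ i, Finset.univ.sup (sig i).np

/-! ### Abstractions -/

section Abstraction

variable {D : Schema} {n : ℕ} {sig : Fin (n+1) → AgentSig} {C U U' : Type}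
  {Ag : ∀ i, Agent D (sig i) U} {Ag' : ∀ i, Agent D (sig i) U'}

/-- `A'` is the abstract agent corresponding to `A`, over the domain `U'`. -/
def IsAbstractAgent {g : AgentSig} (cst : C → U) (cst' : C → U')
    (A : Agent D g U) (A' : Agent D g U') : Prop :=
  ∀ (l' : Inst D U') (α' : GAct g U'), α' ∈ A'.Pr l' ↔
    ∃ l ∈ A.L, ∃ α ∈ A.Pr l, ∃ ι : U → U',
      IsWitness cst cst' ι (fun _ : PUnit => l) (fun _ : PUnit => l') ∧
      ∃ ι' : U → U',
        (∀ u ∈ l.adom ∪ Set.range cst, ι' u = ι u) ∧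
        Set.InjOn ι' (l.adom ∪ Set.range cst ∪ Set.range α.2) ∧
        α' = α.map ι'

/-- `M'` is an abstraction of `M` (over the abstract agents `Ag'`). -/
def IsAbstraction (cst : C → U) (cst' : C → U')
    (M : ACMAS D sig Ag) (M' : ACMAS D sig Ag') : Prop :=
  (∀ i, IsAbstractAgent cst cst' (Ag i) (Ag' i)) ∧
  Iso cst' cst M'.s0 M.s0 ∧
  ∀ (s' t' : GState D n U') (a' : JAct sig U'),
    t' ∈ M'.τ s' a' ↔
      ∃ s ∈ M.S, ∃ t ∈ M.S, ∃ a : JAct sig U, t ∈ M.τ s a ∧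
        ∃ ι : U → U', IsWitness cst cst' ι s s' ∧ IsWitness cst cst' ι t t' ∧
          ∃ ι' : U → U',
            (∀ u ∈ adomF s ∪ adomF t ∪ Set.range cst, ι' u = ι u) ∧
            Set.InjOn ι' (adomF s ∪ adomF t ∪ Set.range cst ∪ actElems a) ∧
            a' = JAct.map ι' a

/-- `M'` is a ⊕-abstraction of `M` (over the abstract agents `Ag'`).
The requirement `s0' = s0` is rendered, across the two interpretation
domains, as: the initial states are isomorphic and `adom(s0) ⊆ C`. -/
def IsOAbstraction (cst : C → U) (cst' : C → U')
    (M : ACMAS D sig Ag) (M' : ACMAS D sig Ag') : Prop :=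
  (∀ i, IsAbstractAgent cst cst' (Ag i) (Ag' i)) ∧
  (Iso cst cst' M.s0 M'.s0 ∧ adomF M.s0 ⊆ Set.range cst) ∧
  ∀ (s' t' : GState D n U') (a' : JAct sig U'),
    t' ∈ M'.τ s' a' ↔
      ∃ s ∈ M.S, ∃ t ∈ M.S, ∃ a : JAct sig U, t ∈ M.τ s a ∧
        ∃ ι : U → U',
          IsWitness cst cst' ι (oplusG s t) (oplusG s' t') ∧
          ∃ ι' : U → U',
            (∀ u ∈ adomF (oplusG s t) ∪ Set.range cst, ι' u = ι u) ∧
            Set.InjOn ι' (adomF (oplusG s t) ∪ Set.range cst ∪ actElems a) ∧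
            a' = JAct.map ι' a

end Abstraction

/-! ### Temporal-epistemic specification languages -/

/-- Sentence-atomic FO-CTL formulas. -/
inductive SAFOCTL (D : Schema) (C : Type) : Type where
  | atom : (ψ : FO D C) → ψ.free = ∅ → SAFOCTL D C
  | not : SAFOCTL D C → SAFOCTL D C
  | imp : SAFOCTL D C → SAFOCTL D C → SAFOCTL D C
  | ax : SAFOCTL D C → SAFOCTL D C
  | au : SAFOCTL D C → SAFOCTL D C → SAFOCTL D C
  | eu : SAFOCTL D C → SAFOCTL D C → SAFOCTL D C

/-- Satisfaction of SA-FO-CTL formulas at a global state. -/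
def SAFOCTL.sat {D : Schema} {C : Type} {n : ℕ} {sig : Fin (n+1) → AgentSig}
    {U : Type} {Ag : ∀ i, Agent D (sig i) U}
    (cst : C → U) (M : ACMAS D sig Ag) :
    SAFOCTL D C → GState D n U → Prop
  | .atom ψ _, s => ∀ σ, FO.sat cst (gInst s) σ ψ
  | .not φ, s => ¬ SAFOCTL.sat cst M φ s
  | .imp φ ψ, s => SAFOCTL.sat cst M φ s → SAFOCTL.sat cst M ψ s
  | .ax φ, s => ∀ r, M.IsRun r → r 0 = s → SAFOCTL.sat cst M φ (r 1)
  | .au φ ψ, s => ∀ r, M.IsRun r → r 0 = s →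
      ∃ k, SAFOCTL.sat cst M ψ (r k) ∧ ∀ j < k, SAFOCTL.sat cst M φ (r j)
  | .eu φ ψ, s => ∃ r, M.IsRun r ∧ r 0 = s ∧
      ∃ k, SAFOCTL.sat cst M ψ (r k) ∧ ∀ j < k, SAFOCTL.sat cst M φ (r j)

/-- `P ⊨ φ` for SA-FO-CTL. -/
def SAFOCTL.satM {D : Schema} {C : Type} {n : ℕ} {sig : Fin (n+1) → AgentSig}
    {U : Type} {Ag : ∀ i, Agent D (sig i) U}
    (cst : C → U) (M : ACMAS D sig Ag) (φ : SAFOCTL D C) : Prop :=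
  SAFOCTL.sat cst M φ M.s0

/-- FO-CTLK formulas, with epistemic operators for agents `1, …, n` and
common knowledge. -/
inductive FOCTLK (D : Schema) (C : Type) (n : ℕ) : Type where
  | atom : FO D C → FOCTLK D C n
  | not : FOCTLK D C n → FOCTLK D C n
  | imp : FOCTLK D C n → FOCTLK D C n → FOCTLK D C n
  | all : ℕ → FOCTLK D C n → FOCTLK D C n
  | ax : FOCTLK D C n → FOCTLK D C n
  | au : FOCTLK D C n → FOCTLK D C n → FOCTLK D C n
  | eu : FOCTLK D C n → FOCTLK D C n → FOCTLK D C n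
  | know : Fin n → FOCTLK D C n → FOCTLK D C n
  | ck : FOCTLK D C n → FOCTLK D C n

namespace FOCTLK

variable {D : Schema} {C : Type} {n : ℕ}

def free : FOCTLK D C n → Finset ℕ
  | .atom ψ => ψ.free
  | .not φ => φ.free
  | .imp φ ψ => φ.free ∪ ψ.free
  | .all x φ => φ.free.erase x
  | .ax φ => φ.free
  | .au φ ψ => φ.free ∪ ψ.free
  | .eu φ ψ => φ.free ∪ ψ.free
  | .know _ φ => φ.free
  | .ck φ => φ.free

def vars : FOCTLK D C n → Finset ℕ
  | .atom ψ => ψ.vars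
  | .not φ => φ.vars
  | .imp φ ψ => φ.vars ∪ ψ.vars
  | .all x φ => insert x φ.vars
  | .ax φ => φ.vars
  | .au φ ψ => φ.vars ∪ ψ.vars
  | .eu φ ψ => φ.vars ∪ ψ.vars
  | .know _ φ => φ.vars
  | .ck φ => φ.vars

/-- Satisfaction `(P, s, σ) ⊨ φ` of FO-CTLK formulas. -/
def sat {sig : Fin (n+1) → AgentSig} {U : Type} {Ag : ∀ i, Agent D (sig i) U}
    (cst : C → U) (M : ACMAS D sig Ag) :
    FOCTLK D C n → GState D n U → (ℕ → U) → Prop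
  | .atom ψ, s, σ => FO.sat cst (gInst s) σ ψ
  | .not φ, s, σ => ¬ sat cst M φ s σ
  | .imp φ ψ, s, σ => sat cst M φ s σ → sat cst M ψ s σ
  | .all x φ, s, σ => ∀ u ∈ adomF s, sat cst M φ s (Function.update σ x u)
  | .ax φ, s, σ => ∀ r, M.IsRun r → r 0 = s → sat cst M φ (r 1) σ
  | .au φ ψ, s, σ => ∀ r, M.IsRun r → r 0 = s →
      ∃ k, sat cst M ψ (r k) σ ∧ ∀ j < k, sat cst M φ (r j) σ
  | .eu φ ψ, s, σ => ∃ r, M.IsRun r ∧ r 0 = s ∧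
      ∃ k, sat cst M ψ (r k) σ ∧ ∀ j < k, sat cst M φ (r j) σ
  | .know i φ, s, σ => ∀ t, M.Epi i.succ s t → sat cst M φ t σ
  | .ck φ, s, σ => ∀ t, Relation.TransGen M.EpiAny s t → sat cst M φ t σ

/-- `P ⊨ φ` for FO-CTLK: satisfaction at the initial state under every
assignment. -/
def satM {sig : Fin (n+1) → AgentSig} {U : Type} {Ag : ∀ i, Agent D (sig i) U}
    (cst : C → U) (M : ACMAS D sig Ag) (φ : FOCTLK D C n) : Prop :=
  ∀ σ : ℕ → U, sat cst M φ M.s0 σ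

end FOCTLK

/-- FO-ECTLK: the existential fragment. -/
inductive FOECTLK (D : Schema) (C : Type) (n : ℕ) : Type where
  | atom : FO D C → FOECTLK D C n
  | and : FOECTLK D C n → FOECTLK D C n → FOECTLK D C n
  | or : FOECTLK D C n → FOECTLK D C n → FOECTLK D C n
  | all : ℕ → FOECTLK D C n → FOECTLK D C n
  | ex : ℕ → FOECTLK D C n → FOECTLK D C n
  | enext : FOECTLK D C n → FOECTLK D C n
  | eu : FOECTLK D C n → FOECTLK D C n → FOECTLK D C n
  | dknow : Fin n → FOECTLK D C n → FOECTLK D C n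
  | dck : FOECTLK D C n → FOECTLK D C n

/-- Satisfaction of FO-ECTLK formulas. -/
def FOECTLK.sat {D : Schema} {C : Type} {n : ℕ} {sig : Fin (n+1) → AgentSig}
    {U : Type} {Ag : ∀ i, Agent D (sig i) U}
    (cst : C → U) (M : ACMAS D sig Ag) :
    FOECTLK D C n → GState D n U → (ℕ → U) → Prop
  | .atom ψ, s, σ => FO.sat cst (gInst s) σ ψ
  | .and φ ψ, s, σ => FOECTLK.sat cst M φ s σ ∧ FOECTLK.sat cst M ψ s σ
  | .or φ ψ, s, σ => FOECTLK.sat cst M φ s σ ∨ FOECTLK.sat cst M ψ s σ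
  | .all x φ, s, σ => ∀ u ∈ adomF s, FOECTLK.sat cst M φ s (Function.update σ x u)
  | .ex x φ, s, σ => ∃ u ∈ adomF s, FOECTLK.sat cst M φ s (Function.update σ x u)
  | .enext φ, s, σ => ∃ r, M.IsRun r ∧ r 0 = s ∧ FOECTLK.sat cst M φ (r 1) σ
  | .eu φ ψ, s, σ => ∃ r, M.IsRun r ∧ r 0 = s ∧
      ∃ k, FOECTLK.sat cst M ψ (r k) σ ∧ ∀ j < k, FOECTLK.sat cst M φ (r j) σ
  | .dknow i φ, s, σ => ∃ t, M.Epi i.succ s t ∧ FOECTLK.sat cst M φ t σ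
  | .dck φ, s, σ => ∃ t, Relation.TransGen M.EpiAny s t ∧ FOECTLK.sat cst M φ t σ

/-- `P ⊨ φ` for FO-ECTLK. -/
def FOECTLK.satM {D : Schema} {C : Type} {n : ℕ} {sig : Fin (n+1) → AgentSig}
    {U : Type} {Ag : ∀ i, Agent D (sig i) U}
    (cst : C → U) (M : ACMAS D sig Ag) (φ : FOECTLK D C n) : Prop :=
  ∀ σ : ℕ → U, FOECTLK.sat cst M φ M.s0 σ

/-- `Mb` is the `b`-restriction of `M`. -/
def IsBRestriction {D : Schema} {n : ℕ} {sig : Fin (n+1) → AgentSig} {U : Type}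
    {Ag : ∀ i, Agent D (sig i) U} (Mb M : ACMAS D sig Ag) (b : ℕ) : Prop :=
  Mb.s0 = M.s0 ∧
  Mb.S = { s ∈ M.S | (adomF s).Finite ∧ (adomF s).ncard ≤ b } ∧
  ∀ s a, Mb.τ s a = { t ∈ M.τ s a | s ∈ Mb.S ∧ t ∈ Mb.S }

/-! ### Artifact-centric programs -/

/-- A declarative artifact-centric program. -/
structure ACProgram (D : Schema) (C : Type) {n : ℕ} (sig : Fin (n+1) → AgentSig) where
  /-- local database schemas, as sets of relation symbols -/
  locRel : Fin (n+1) → Set D.Rel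
  locDisj : ∀ i j, i ≠ j → Disjoint (locRel i) (locRel j)
  /-- initial local states; their values are constants -/
  l0 : ∀ _ : Fin (n+1), Inst D C
  l0_loc : ∀ i r, r ∉ locRel i → (l0 i).rel r = ∅
  /-- preconditions: FO-formulas over the local schema whose free variables
  are among the action parameters -/
  pre : ∀ i, (sig i).Act → FO D C
  /-- postconditions: FO-formulas over the global schema and its primed copy -/
  post : ∀ i, (sig i).Act → FO D.double C
  pre_free : ∀ i a, ↑(pre i a).free ⊆ { x : ℕ | x < (sig i).np a }
  post_free : ∀ i a, ↑(post i a).free ⊆ { x : ℕ | x < (sig i).np a }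
  pre_loc : ∀ i a, (pre i a).UsesOnly (locRel i)

namespace ACProgram

variable {D : Schema} {C : Type} {n : ℕ} {sig : Fin (n+1) → AgentSig}

/-- The constants mentioned in the program. -/
def progConsts (P : ACProgram D C sig) : Set C :=
  (⋃ i, (P.l0 i).adom) ∪
  ⋃ i, ⋃ a : (sig i).Act, ((P.pre i a).consts ∪ (P.post i a).consts)

/-- Ground values of the postcondition parameters of a joint ground action. -/
def postElems (P : ACProgram D C sig) {U : Type} (a : JAct sig U) : Set U :=
  { u | ∃ (i : Fin (n+1)) (j : Fin ((sig i).np (a i).1)),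
      (j : ℕ) ∈ (P.post i (a i).1).free ∧ (a i).2 j = u }

/-- The agent induced by the program for index `i`. -/
def InducedAgent {U : Type} (cst : C → U) (P : ACProgram D C sig) (i : Fin (n+1))
    (A : Agent D (sig i) U) : Prop :=
  A.L = { l : Inst D U | ∀ r, r ∉ P.locRel i → l.rel r = ∅ } ∧
  ∀ (l : Inst D U) (α : GAct (sig i) U), α ∈ A.Pr l ↔
    ∀ σ : ℕ → U, (∀ j : Fin ((sig i).np α.1), σ (j : ℕ) = α.2 j) →
      FO.sat cst l σ (P.pre i α.1)

/-- The transitions induced by the program. -/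
def InducedTrans {U : Type} (cst : C → U) (P : ACProgram D C sig)
    (s t : GState D n U) (a : JAct sig U) : Prop :=
  (∀ i, ∀ σ : ℕ → U, (∀ j : Fin ((sig i).np (a i).1), σ (j : ℕ) = (a i).2 j) →
      FO.sat cst (s i) σ (P.pre i (a i).1)) ∧
  adomF t ⊆ adomF s ∪ P.postElems a ∪ cst '' (⋃ i, (P.post i (a i).1).consts) ∧
  (∀ i, ∀ σ : ℕ → U, (∀ j : Fin ((sig i).np (a i).1), σ (j : ℕ) = (a i).2 j) →
      FO.sat cst ((gInst s).oplus (gInst t)) σ (P.post i (a i).1))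

/-- `M` is the AC-MAS induced by the program `P` (the transition relation is
assumed to be serial). -/
def InducedACMAS {U : Type} (cst : C → U) (P : ACProgram D C sig)
    (Ag : ∀ i, Agent D (sig i) U) (M : ACMAS D sig Ag) : Prop :=
  (∀ i, P.InducedAgent cst i (Ag i)) ∧
  M.s0 = (fun i => (P.l0 i).map cst) ∧
  (∀ s t a, t ∈ M.τ s a ↔ P.InducedTrans cst s t a) ∧
  M.Std

end ACProgram
/-!
Uniformity is a renaming invariance. A witness `ι` of `s ⊕ t ≃ s' ⊕ t'` forces
`s' = ι(s)` and `t' = ι(t)` componentwise, and the satisfaction of FO-formulas under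
active-domain semantics is invariant under renamings that are injective on the active
domain, the constants and the values of the free variables and that fix the constants.
Hence the defining conditions of an induced transition (preconditions, postconditions,
active-domain bound) are preserved by such renamings, which is condition (1). For
condition (2) the only issue is that `t'` is reachable: along a run `s0 → ⋯ → t`, the
renaming is extended backwards, one transition at a time, to an injective renaming of the
(finite) active domain of the previous state and the action parameters; at `s0`, whose
active domain consists of constants, the renaming is the identity.
-/

open Set

section Renaming

variable {D : Schema} {U U' : Type}

theorem Inst.ext {I J : Inst D U} (h : I.rel = J.rel) : I = J := by
  cases I; cases J; simp_all

theorem Inst.adom_map (f : U → U') (I : Inst D U) : (I.map f).adom = f '' I.adom := by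
  ext u
  constructor
  · rintro ⟨_, _, ⟨t, ht, rfl⟩, j, rfl⟩
    exact ⟨t j, ⟨_, t, ht, j, rfl⟩, rfl⟩
  · rintro ⟨v, ⟨r, t, ht, j, rfl⟩, rfl⟩
    exact ⟨r, f ∘ t, ⟨t, ht, rfl⟩, j, rfl⟩

theorem Inst.map_congr {f g : U → U'} {I : Inst D U} (h : EqOn f g I.adom) :
    I.map f = I.map g :=
  Inst.ext <| funext fun r => image_congr fun t ht => funext fun j => h ⟨r, t, ht, j, rfl⟩

theorem Inst.map_map {U'' : Type} (f : U → U') (g : U' → U'') (I : Inst D U) :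
    (I.map f).map g = I.map (g ∘ f) :=
  Inst.ext <| funext fun r => image_image (fun t => g ∘ t) (fun t => f ∘ t) (I.rel r)

theorem Inst.adom_oplus (I J : Inst D U) : (I.oplus J).adom = I.adom ∪ J.adom := by
  ext u
  constructor
  · rintro ⟨r | r, t, ht, j, rfl⟩
    · exact Or.inl ⟨r, t, ht, j, rfl⟩
    · exact Or.inr ⟨r, t, ht, j, rfl⟩
  · rintro (⟨r, t, ht, j, rfl⟩ | ⟨r, t, ht, j, rfl⟩)
    · exact ⟨.inl r, t, ht, j, rfl⟩
    · exact ⟨.inr r, t, ht, j, rfl⟩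

theorem Inst.map_oplus (f : U → U') (I J : Inst D U) :
    (I.oplus J).map f = (I.map f).oplus (J.map f) :=
  Inst.ext <| funext fun r => by cases r <;> rfl

theorem Inst.oplus_injective {I J I' J' : Inst D U} (h : I.oplus J = I'.oplus J') :
    I = I' ∧ J = J' := by
  have h' := congrArg Inst.rel h
  exact ⟨Inst.ext (funext fun r => congrFun h' (.inl r)),
    Inst.ext (funext fun r => congrFun h' (.inr r))⟩

theorem Inst.adom_finite (I : Inst D U) : I.adom.Finite := by
  refine ((finite_iUnion fun r => (I.finite r).biUnion fun t _ => finite_range t)).subset ?_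
  rintro u ⟨r, t, ht, j, rfl⟩
  exact mem_iUnion.2 ⟨r, mem_biUnion ht ⟨j, rfl⟩⟩

theorem Inst.map_mem_rel_iff {γ : U → U'} {A : Set U} (hinj : InjOn γ A) {I : Inst D U}
    (hI : I.adom ⊆ A) {r : D.Rel} {t : Fin (D.arity r) → U} (ht : ∀ j, t j ∈ A) :
    (fun j => γ (t j)) ∈ (I.map γ).rel r ↔ t ∈ I.rel r := by
  refine ⟨?_, fun h => ⟨t, h, rfl⟩⟩
  rintro ⟨t₀, ht₀, heq⟩
  have : t₀ = t := funext fun j => hinj (hI ⟨r, t₀, ht₀, j, rfl⟩) (ht j) (congrFun heq j)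
  exact this ▸ ht₀

theorem Inst.eq_map_of_rel_iff {γ : U → U'} {B : Set U} {I : Inst D U} {J : Inst D U'}
    (hI : I.adom ⊆ B) (hJ : J.adom ⊆ γ '' B)
    (hiff : ∀ (r : D.Rel) (t : Fin (D.arity r) → U), (∀ j, t j ∈ B) →
      (t ∈ I.rel r ↔ (fun j => γ (t j)) ∈ J.rel r)) :
    J = I.map γ := by
  refine Inst.ext <| funext fun r => Subset.antisymm (fun t' ht' => ?_) ?_
  · choose b hb hγb using fun j => hJ ⟨r, t', ht', j, rfl⟩
    have ht'b : t' = fun j => γ (b j) := funext fun j => (hγb j).symm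
    exact ⟨b, (hiff r b hb).2 (ht'b ▸ ht'), ht'b.symm⟩
  · rintro _ ⟨t, ht, rfl⟩
    exact (hiff r t fun j => hI ⟨r, t, ht, j, rfl⟩).1 ht

variable {X : Type} {n : ℕ}

theorem adom_subset_adomF (s : X → Inst D U) (i : X) : (s i).adom ⊆ adomF s :=
  subset_iUnion (fun i => (s i).adom) i

theorem adomF_finite [Finite X] (s : X → Inst D U) : (adomF s).Finite :=
  finite_iUnion fun i => (s i).adom_finite

theorem adomF_oplusG (s t : GState D n U) : adomF (oplusG s t) = adomF s ∪ adomF t := by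
  simp only [adomF, oplusG, Inst.adom_oplus, iUnion_union_distrib]

theorem adom_gInst (s : GState D n U) : (gInst s).adom = adomF s := by
  ext u
  constructor
  · rintro ⟨r, t, ht, j, rfl⟩
    obtain ⟨i, hi⟩ := mem_iUnion.1 ht
    exact mem_iUnion.2 ⟨i, r, t, hi, j, rfl⟩
  · intro h
    obtain ⟨i, r, t, ht, j, rfl⟩ := mem_iUnion.1 h
    exact ⟨r, t, mem_iUnion.2 ⟨i, ht⟩, j, rfl⟩

theorem actElems_finite {sig : Fin (n+1) → AgentSig} (a : JAct sig U) :
    (actElems a).Finite := by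
  refine (finite_iUnion fun i => finite_range (a i).2).subset ?_
  rintro u ⟨i, j, rfl⟩
  exact mem_iUnion.2 ⟨i, j, rfl⟩

def GState.map (f : U → U') (s : GState D n U) : GState D n U' := fun i => (s i).map f

theorem GState.map_congr {f g : U → U'} {s : GState D n U} (h : EqOn f g (adomF s)) :
    s.map f = s.map g :=
  funext fun i => Inst.map_congr (h.mono (adom_subset_adomF s i))

theorem adomF_map (f : U → U') (s : GState D n U) : adomF (s.map f) = f '' adomF s := by
  simp only [adomF, GState.map, Inst.adom_map, image_iUnion]

theorem gInst_map (f : U → U') (s : GState D n U) : gInst (s.map f) = (gInst s).map f :=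
  Inst.ext <| funext fun _ => (image_iUnion (f := fun t => f ∘ t)).symm

theorem IsWitness.eq_map {C : Type} {cst : C → U} {cst' : C → U'} {ι : U → U'}
    {s : X → Inst D U} {s' : X → Inst D U'} (hw : IsWitness cst cst' ι s s') (i : X) :
    s' i = (s i).map ι :=
  Inst.eq_map_of_rel_iff (fun _ hu => Or.inl (adom_subset_adomF s i hu))
    (fun _ hu => hw.1.surjOn (Or.inl (adom_subset_adomF s' i hu))) (hw.2.2 i)

theorem IsWitness.oplusG_eq_map {C : Type} {cst : C → U} {cst' : C → U'} {ι : U → U'}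
    {s t : GState D n U} {s' t' : GState D n U'}
    (hw : IsWitness cst cst' ι (oplusG s t) (oplusG s' t')) :
    s' = s.map ι ∧ t' = t.map ι := by
  have h i := Inst.oplus_injective ((hw.eq_map i).trans (Inst.map_oplus ι (s i) (t i)))
  exact ⟨funext fun i => (h i).1, funext fun i => (h i).2⟩

end Renaming

theorem Set.InjOn.exists_extend {α : Type*} {ι : α → α} {A B : Set α} (hinj : InjOn ι B)
    (hBA : B ⊆ A) (hA : A.Finite) : ∃ γ : α → α, EqOn γ ι B ∧ InjOn γ A := by
  classical
  rcases isEmpty_or_nonempty α with hα | hα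
  · exact ⟨ι, eqOn_refl _ _, fun u => isEmptyElim u⟩
  -- room for `A \ B` outside `ι '' B`, counted with `encard` since `α` may be finite
  have hle : (A \ B).encard ≤ (ι '' B)ᶜ.encard := by
    rw [← ENat.add_le_add_iff_right (hA.subset hBA).encard_lt_top.ne,
      encard_sdiff_add_encard_of_subset hBA, ← hinj.encard_image, add_comm,
      encard_add_encard_compl]
    exact encard_le_encard (subset_univ A)
  obtain ⟨f, hfA, hfinj⟩ := hA.sdiff.exists_injOn_of_encard_le hle
  refine ⟨B.piecewise ι f, piecewise_eqOn B ι f, ?_⟩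
  rw [← union_sdiff_cancel hBA, injOn_union disjoint_sdiff_right,
    (piecewise_eqOn B ι f).injOn_iff,
    ((piecewise_eqOn_compl B ι f).mono fun _ hx => hx.2).injOn_iff]
  refine ⟨hinj, hfinj, fun x hx y hy hxy => hfA hy ?_⟩
  rw [piecewise_eq_of_mem B ι f hx, piecewise_eq_of_notMem B ι f hy.2] at hxy
  exact ⟨x, hx, hxy⟩

section Satisfaction

variable {D : Schema} {C U : Type} {cst : C → U} {γ : U → U} {A : Set U}

theorem Term.val_map (hC : range cst ⊆ A) (hγc : ∀ c, γ (cst c) = cst c) {σ σ' : ℕ → U}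
    (t : Term C) (hσ : ∀ x ∈ t.varsF, σ x ∈ A ∧ σ' x = γ (σ x)) :
    t.val cst σ ∈ A ∧ t.val cst σ' = γ (t.val cst σ) := by
  cases t with
  | inl x => exact hσ x (Finset.mem_singleton_self x)
  | inr c => exact ⟨hC ⟨c, rfl⟩, (hγc c).symm⟩

theorem FO.sat_map (hinj : InjOn γ A) {I : Inst D U} (hI : I.adom ⊆ A)
    (hC : range cst ⊆ A) (hγc : ∀ c, γ (cst c) = cst c) (φ : FO D C) {σ σ' : ℕ → U}
    (hσ : ∀ x ∈ φ.free, σ x ∈ A ∧ σ' x = γ (σ x)) :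
    FO.sat cst I σ φ ↔ FO.sat cst (I.map γ) σ' φ := by
  induction φ generalizing σ σ' with
  | eq t₁ t₂ =>
    obtain ⟨h₁A, h₁⟩ := t₁.val_map hC hγc fun x hx => hσ x (Finset.mem_union_left _ hx)
    obtain ⟨h₂A, h₂⟩ := t₂.val_map hC hγc fun x hx => hσ x (Finset.mem_union_right _ hx)
    simp only [FO.sat, h₁, h₂]
    exact (hinj.eq_iff h₁A h₂A).symm
  | rel r ts =>
    have hts j := (ts j).val_map hC hγc fun x hx =>
      hσ x (Finset.mem_biUnion.2 ⟨j, Finset.mem_univ j, hx⟩)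
    simp only [FO.sat, fun j => (hts j).2]
    exact (Inst.map_mem_rel_iff hinj hI fun j => (hts j).1).symm
  | not φ ih => exact not_congr (ih hσ)
  | imp φ ψ ihφ ihψ =>
    exact imp_congr (ihφ fun x hx => hσ x (Finset.mem_union_left _ hx))
      (ihψ fun x hx => hσ x (Finset.mem_union_right _ hx))
  | all x φ ih =>
    simp only [FO.sat, Inst.adom_map, forall_mem_image]
    refine forall₂_congr fun u hu => ih fun y hy => ?_
    rcases eq_or_ne y x with rfl | hyx
    · simp [hI hu]
    · simpa only [Function.update_of_ne hyx] using hσ y (Finset.mem_erase.2 ⟨hyx, hy⟩)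

/-- The shape in which pre- and postconditions are evaluated on a ground action. -/
theorem FO.sat_params_map {np : ℕ} {φ : FO D C} (hfree : ↑φ.free ⊆ {x : ℕ | x < np})
    {u : Fin np → U} (hinj : InjOn γ A) {I : Inst D U} (hI : I.adom ⊆ A)
    (hC : range cst ⊆ A) (hu : range u ⊆ A) (hγc : ∀ c, γ (cst c) = cst c)
    (h : ∀ σ : ℕ → U, (∀ j : Fin np, σ j = u j) → FO.sat cst I σ φ) (σ' : ℕ → U)
    (hσ' : ∀ j : Fin np, σ' j = γ (u j)) : FO.sat cst (I.map γ) σ' φ := by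
  let σ : ℕ → U := fun x => if hx : x < np then u ⟨x, hx⟩ else σ' x
  refine (FO.sat_map hinj hI hC hγc φ fun x hx => ?_).1 (h σ fun j => dif_pos j.isLt)
  have hx : x < np := hfree hx
  simp only [σ, dif_pos hx]
  exact ⟨hu ⟨_, rfl⟩, hσ' ⟨x, hx⟩⟩

end Satisfaction

namespace ACProgram

variable {D : Schema} {C : Type} {n : ℕ} {sig : Fin (n+1) → AgentSig} {U : Type}
  {cst : C → U} {P : ACProgram D C sig} {Ag : ∀ i, Agent D (sig i) U} {M : ACMAS D sig Ag}

theorem InducedTrans.map {s t : GState D n U} {a : JAct sig U} {γ : U → U}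
    (hinj : InjOn γ (adomF (oplusG s t) ∪ range cst ∪ actElems a))
    (hγc : ∀ c, γ (cst c) = cst c) (h : P.InducedTrans cst s t a) :
    P.InducedTrans cst (s.map γ) (t.map γ) (a.map γ) := by
  set A := adomF (oplusG s t) ∪ range cst ∪ actElems a
  have hsA : adomF s ⊆ A := fun u hu => Or.inl (Or.inl (adomF_oplusG s t ▸ Or.inl hu))
  have htA : adomF t ⊆ A := fun u hu => Or.inl (Or.inl (adomF_oplusG s t ▸ Or.inr hu))
  have hCA : range cst ⊆ A := fun u hu => Or.inl (Or.inr hu)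
  have haA i : range (a i).2 ⊆ A := by rintro _ ⟨j, rfl⟩; exact Or.inr ⟨i, j, rfl⟩
  obtain ⟨hpre, hadom, hpost⟩ := h
  refine ⟨fun i => FO.sat_params_map (P.pre_free i (a i).1) hinj
      ((adom_subset_adomF s i).trans hsA) hCA (haA i) hγc (hpre i), ?_,
    fun i => ?_⟩
  · rw [adomF_map, adomF_map]
    refine (image_mono hadom).trans ?_
    rintro _ ⟨u, (hu | ⟨i, j, hj, rfl⟩) | ⟨c, hc, rfl⟩, rfl⟩
    · exact Or.inl (Or.inl ⟨u, hu, rfl⟩)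
    · exact Or.inl (Or.inr ⟨i, j, hj, rfl⟩)
    · exact Or.inr ⟨c, hc, (hγc c).symm⟩
  · have hI : ((gInst s).oplus (gInst t)).adom ⊆ A := by
      rw [Inst.adom_oplus, adom_gInst, adom_gInst]
      exact union_subset hsA htA
    have := FO.sat_params_map (P.post_free i (a i).1) hinj hI hCA (haA i) hγc (hpost i)
    rwa [gInst_map, gInst_map, ← Inst.map_oplus]

theorem s0_map (hind : P.InducedACMAS cst Ag M) {ι : U → U} (hc : ∀ c, ι (cst c) = cst c) :
    M.s0.map ι = M.s0 := by
  rw [hind.2.1]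
  exact funext fun i => (Inst.map_map cst ι (P.l0 i)).trans
    (congrArg (Inst.map · (P.l0 i)) (funext hc : ι ∘ cst = cst))

theorem reflTransGen_map [Finite C] (hind : P.InducedACMAS cst Ag M) {t : GState D n U}
    (ht : Relation.ReflTransGen M.Tr M.s0 t) {ι : U → U}
    (hinj : InjOn ι (adomF t ∪ range cst)) (hc : ∀ c, ι (cst c) = cst c) :
    Relation.ReflTransGen M.Tr M.s0 (t.map ι) := by
  induction ht generalizing ι with
  | refl => rw [s0_map hind hc]
  | @tail b c _ hbc ih =>
    obtain ⟨a, hca⟩ := hbc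
    set A := adomF (oplusG b c) ∪ range cst ∪ actElems a
    have hA {V : Set U} (hV : V ⊆ adomF (oplusG b c)) : V ∪ range cst ⊆ A :=
      (union_subset_union_left _ hV).trans subset_union_left
    have hAfin : A.Finite :=
      ((adomF_finite _).union (finite_range cst)).union (actElems_finite a)
    obtain ⟨γ, hγι, hγinj⟩ :=
      hinj.exists_extend (hA (adomF_oplusG b c ▸ subset_union_right)) hAfin
    have hγc c : γ (cst c) = cst c := (hγι (Or.inr ⟨c, rfl⟩)).trans (hc c)
    have hb := ih (hγinj.mono (hA (adomF_oplusG b c ▸ subset_union_left))) hγc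
    rw [GState.map_congr (hγι.mono subset_union_left).symm]
    exact hb.tail ⟨a.map γ, (hind.2.2.1 _ _ _).2 (((hind.2.2.1 _ _ _).1 hca).map hγinj hγc)⟩

end ACProgram

theorem statement17_general
    {D : Schema} {C : Type} [Fintype C] {n : ℕ}
    {sig : Fin (n+1) → AgentSig} {U : Type}
    (cst : C → U)
    (P : ACProgram D C sig)
    {Ag : ∀ i, Agent D (sig i) U} (M : ACMAS D sig Ag)
    (hind : P.InducedACMAS cst Ag M) :
    Uniform cst M := by
  have hτ := hind.2.2.1
  refine ⟨?_, ?_⟩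
  · intro s _ t _ s' _ t' a hta ι hw ι' hagree hinj' hc'
    obtain ⟨rfl, rfl⟩ := hw.oplusG_eq_map
    have hιι' : EqOn ι ι' (adomF (oplusG s t)) := fun u hu => (hagree u (Or.inl hu)).symm
    rw [GState.map_congr (hιι'.mono (adomF_oplusG s t ▸ subset_union_left)),
      GState.map_congr (hιι'.mono (adomF_oplusG s t ▸ subset_union_right))]
    exact (hτ _ _ _).2 (((hτ _ _ _).1 hta).map hinj' hc')
  · intro s _ t ht s' hs' t' i hepi ⟨ι, hw⟩
    obtain ⟨rfl, rfl⟩ := hw.oplusG_eq_map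
    have hS := hind.2.2.2.2
    refine ⟨hs', ?_, congrArg (Inst.map ι) hepi.2.2⟩
    rw [hS] at ht ⊢
    exact P.reflTransGen_map hind ht
      (hw.1.injOn.mono (union_subset_union_left _ (adomF_oplusG s t ▸ subset_union_right)))
      hw.2.1

theorem statement17
    {D : Schema} {C : Type} [Fintype C] {n : ℕ}
    {sig : Fin (n+1) → AgentSig} {U : Type}
    (cst : C → U) (hcst : Function.Injective cst)
    (P : ACProgram D C sig)
    {Ag : ∀ i, Agent D (sig i) U} (M : ACMAS D sig Ag)
    (hind : P.InducedACMAS cst Ag M) :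
    Uniform cst M :=
  statement17_general cst P M hind
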